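/- arXiv:1904.07186 — 2 statements merged into one kernel-verified Lean document; each statement's English description precedes it below -/
import Mathlib

section
/- Assume h₁, h₂ are continuously differentiable and the quotient h̃₁ := h₁/h₂ has nonpositive derivative on [0,∞). Let (y₁,y₂) : [0,T) → (0,∞)² be a differentiable solution of the ODE system with y₁(0), y₂(0) > 0. If a₁ > 0 and a₂ ≠ 0, then there exists a constant c > 0 such that y₁(t) ≥ c·(h₁(t)/h₂(t))^{1/a₁}·y₂(t)^{a₂/a₁} for all t ∈ [0,T). -/
open Set Filter Topology

/-!
With `a₁ = p₂₁ - p₁₁ + 1`, `a₂ = p₁₂ - p₂₂ + 1` and `H = h₁ / h₂`, the chain rule turns the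
system into `(y₁ ^ a₁)' = a₁ E` and `(H y₂ ^ a₂)' = H' y₂ ^ a₂ + a₂ E`, where
`E = h₁ y₁ ^ p₂₁ y₂ ^ p₁₂ > 0`. Hence for any `K > 0` with `K a₂ ≤ a₁` the function
`y₁ ^ a₁ - K H y₂ ^ a₂` has derivative `(a₁ - K a₂) E - K H' y₂ ^ a₂ ≥ 0`, because `H' ≤ 0`.
Taking `K` small enough that this function is nonnegative at `0`, it stays nonnegative,
and taking `a₁`-th roots gives the claim with `c = K ^ (1 / a₁)`.
-/

theorem Convex.monotoneOn_of_hasDerivWithinAt_nonneg {f f' : ℝ → ℝ} {s : Set ℝ}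
    (hs : Convex ℝ s) (hf : ∀ t ∈ s, HasDerivWithinAt f (f' t) s t) (hf' : ∀ t ∈ s, 0 ≤ f' t) :
    MonotoneOn f s :=
  _root_.monotoneOn_of_hasDerivWithinAt_nonneg hs (fun t ht => (hf t ht).continuousWithinAt)
    (fun t ht => (hf t (interior_subset ht)).mono interior_subset)
    (fun t ht => hf' t (interior_subset ht))

theorem HasDerivWithinAt.rpow_sub_add_one {y : ℝ → ℝ} {g p q t : ℝ} {s : Set ℝ}
    (hy : HasDerivWithinAt y (g * y t ^ p) s t) (hpos : 0 < y t) :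
    HasDerivWithinAt (fun u => y u ^ (q - p + 1)) ((q - p + 1) * g * y t ^ q) s t := by
  have hpow : y t ^ p * y t ^ (q - p + 1 - 1) = y t ^ q := by
    rw [← Real.rpow_add hpos]; ring_nf
  refine (hy.rpow_const (Or.inl hpos.ne')).congr_deriv ?_
  linear_combination (q - p + 1) * g * hpow

theorem rpow_le_of_mul_rpow_le {K H y x a b : ℝ} (hK : 0 ≤ K) (hH : 0 ≤ H) (hy : 0 < y)
    (hx : 0 ≤ x) (ha : 0 < a) (h : K * (H * y ^ b) ≤ x ^ a) :
    K ^ (1 / a) * H ^ (1 / a) * y ^ (b / a) ≤ x := by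
  have hyb : 0 ≤ y ^ b := (Real.rpow_pos_of_pos hy b).le
  calc K ^ (1 / a) * H ^ (1 / a) * y ^ (b / a) = (K * (H * y ^ b)) ^ (1 / a) := by
        rw [Real.mul_rpow hK (mul_nonneg hH hyb), Real.mul_rpow hH hyb,
          ← Real.rpow_mul hy.le, mul_one_div, mul_assoc]
    _ ≤ (x ^ a) ^ (1 / a) := by gcongr
    _ = x := by rw [← Real.rpow_mul hx, mul_one_div_cancel ha.ne', Real.rpow_one]

theorem exists_pos_mul_le_and_mul_le {D Y a b : ℝ} (hY : 0 < Y) (ha : 0 < a) :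
    ∃ K, 0 < K ∧ K * D ≤ Y ∧ K * b ≤ a := by
  have hcont : ∀ c : ℝ, Tendsto (fun K : ℝ => K * c) (𝓝 0) (𝓝 0) := fun c => by
    simpa using (continuous_mul_const c).tendsto 0
  have hsmall : ∀ᶠ K in 𝓝[>] (0 : ℝ), K * D < Y ∧ K * b < a :=
    nhdsWithin_le_nhds (((hcont D).eventually (gt_mem_nhds hY)).and
      ((hcont b).eventually (gt_mem_nhds ha)))
  obtain ⟨K, ⟨hKD, hKb⟩, hK⟩ := (hsmall.and self_mem_nhdsWithin).exists
  exact ⟨K, hK, hKD.le, hKb.le⟩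

theorem hasDerivWithinAt_rpow_sub_mul_rpow {p11 p12 p21 p22 K H' t : ℝ}
    {h1 h2 H y1 y2 : ℝ → ℝ} {s : Set ℝ}
    (hy1 : HasDerivWithinAt y1 (h1 t * y1 t ^ p11 * y2 t ^ p12) s t)
    (hy2 : HasDerivWithinAt y2 (h2 t * y2 t ^ p22 * y1 t ^ p21) s t)
    (hy1pos : 0 < y1 t) (hy2pos : 0 < y2 t)
    (hH : HasDerivWithinAt H H' s t) (hh : h1 t = H t * h2 t) :
    HasDerivWithinAt (fun u => y1 u ^ (p21 - p11 + 1) - K * (H u * y2 u ^ (p12 - p22 + 1)))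
      (((p21 - p11 + 1) - K * (p12 - p22 + 1)) * (h1 t * y1 t ^ p21 * y2 t ^ p12)
        - K * H' * y2 t ^ (p12 - p22 + 1)) s t := by
  have d1 : HasDerivWithinAt (fun u => y1 u ^ (p21 - p11 + 1))
      ((p21 - p11 + 1) * (h1 t * y2 t ^ p12) * y1 t ^ p21) s t :=
    (hy1.congr_deriv (by ring)).rpow_sub_add_one hy1pos
  have d2 : HasDerivWithinAt (fun u => y2 u ^ (p12 - p22 + 1))
      ((p12 - p22 + 1) * (h2 t * y1 t ^ p21) * y2 t ^ p12) s t :=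
    (hy2.congr_deriv (by ring)).rpow_sub_add_one hy2pos
  refine (d1.sub ((hH.mul d2).const_mul K)).congr_deriv ?_
  rw [hh]
  ring

theorem statement8_general (p11 p12 p21 p22 : ℝ)
    (h1 h2 : ℝ → ℝ)
    (hh1c : ContDiffOn ℝ 1 h1 (Set.Ici 0)) (hh2c : ContDiffOn ℝ 1 h2 (Set.Ici 0))
    (hh1p : ∀ t : ℝ, 0 ≤ t → 0 < h1 t) (hh2p : ∀ t : ℝ, 0 ≤ t → 0 < h2 t)
    (hdec : ∀ t : ℝ, 0 ≤ t →
      derivWithin (fun s => h1 s / h2 s) (Set.Ici 0) t ≤ 0)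
    (T : ℝ) (hT : 0 < T)
    (y1 y2 : ℝ → ℝ)
    (hy1pos : ∀ t ∈ Set.Ico (0:ℝ) T, 0 < y1 t)
    (hy2pos : ∀ t ∈ Set.Ico (0:ℝ) T, 0 < y2 t)
    (hy1d : ∀ t ∈ Set.Ico (0:ℝ) T,
      HasDerivWithinAt y1 (h1 t * y1 t ^ p11 * y2 t ^ p12) (Set.Ico 0 T) t)
    (hy2d : ∀ t ∈ Set.Ico (0:ℝ) T,
      HasDerivWithinAt y2 (h2 t * y2 t ^ p22 * y1 t ^ p21) (Set.Ico 0 T) t)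
    (ha1 : 0 < p21 - p11 + 1) :
    ∃ c : ℝ, 0 < c ∧ ∀ t ∈ Set.Ico (0:ℝ) T,
      c * (h1 t / h2 t) ^ (1 / (p21 - p11 + 1)) *
          y2 t ^ ((p12 - p22 + 1) / (p21 - p11 + 1)) ≤ y1 t := by
  set a1 := p21 - p11 + 1
  set a2 := p12 - p22 + 1
  set H : ℝ → ℝ := fun s => h1 s / h2 s
  have hH : ∀ t ∈ Ico 0 T, HasDerivWithinAt H (derivWithin H (Ici 0) t) (Ico 0 T) t :=
    fun t ht => (((hh1c.differentiableOn one_ne_zero) t ht.1).div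
      ((hh2c.differentiableOn one_ne_zero) t ht.1) (hh2p t ht.1).ne').hasDerivWithinAt.mono
        Ico_subset_Ici_self
  have h0 : (0 : ℝ) ∈ Ico 0 T := ⟨le_rfl, hT⟩
  obtain ⟨K, hK, hK0, hKa⟩ := exists_pos_mul_le_and_mul_le (D := H 0 * y2 0 ^ a2) (b := a2)
    (Real.rpow_pos_of_pos (hy1pos 0 h0) a1) ha1
  have hmono : MonotoneOn (fun u => y1 u ^ a1 - K * (H u * y2 u ^ a2)) (Ico 0 T) := by
    refine (convex_Ico 0 T).monotoneOn_of_hasDerivWithinAt_nonneg (fun t ht =>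
      hasDerivWithinAt_rpow_sub_mul_rpow (hy1d t ht) (hy2d t ht) (hy1pos t ht) (hy2pos t ht)
        (hH t ht) (div_mul_cancel₀ _ (hh2p t ht.1).ne').symm) fun t ht => ?_
    have hE : 0 < h1 t * y1 t ^ p21 * y2 t ^ p12 := by
      have := hy1pos t ht; have := hy2pos t ht; have := hh1p t ht.1; positivity
    have hH' : K * derivWithin H (Ici 0) t * y2 t ^ a2 ≤ 0 :=
      mul_nonpos_of_nonpos_of_nonneg (mul_nonpos_of_nonneg_of_nonpos hK.le (hdec t ht.1))
        (Real.rpow_pos_of_pos (hy2pos t ht) a2).le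
    exact sub_nonneg.mpr (hH'.trans (mul_nonneg (sub_nonneg.mpr hKa) hE.le))
  refine ⟨K ^ (1 / a1), Real.rpow_pos_of_pos hK _, fun t ht => ?_⟩
  have hKt : K * (H t * y2 t ^ a2) ≤ y1 t ^ a1 := by
    simpa [sub_nonneg] using (sub_nonneg.mpr hK0).trans (hmono h0 ht ht.1)
  exact rpow_le_of_mul_rpow_le hK.le (div_pos (hh1p t ht.1) (hh2p t ht.1)).le (hy2pos t ht)
    (hy1pos t ht).le ha1 hKt

/-- Lemma 5.1(a) of the paper. If `h₁,h₂` are continuously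
differentiable with `(h₁/h₂)' ≤ 0` on `[0,∞)`, `(y₁,y₂)` is a positive
differentiable solution of the ODE system on `[0,T)`, `a₁ = p₂₁-p₁₁+1 > 0` and
`a₂ = p₁₂-p₂₂+1 ≠ 0`, then there is `c > 0` with
`y₁(t) ≥ c (h₁(t)/h₂(t))^{1/a₁} y₂(t)^{a₂/a₁}` on `[0,T)`. -/
theorem statement8 (p11 p12 p21 p22 : ℝ)
    (hp11 : 0 ≤ p11) (hp12 : 0 ≤ p12) (hp21 : 0 ≤ p21) (hp22 : 0 ≤ p22)
    (h1 h2 : ℝ → ℝ)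
    (hh1c : ContDiffOn ℝ 1 h1 (Set.Ici 0)) (hh2c : ContDiffOn ℝ 1 h2 (Set.Ici 0))
    (hh1p : ∀ t : ℝ, 0 ≤ t → 0 < h1 t) (hh2p : ∀ t : ℝ, 0 ≤ t → 0 < h2 t)
    (hdec : ∀ t : ℝ, 0 ≤ t →
      derivWithin (fun s => h1 s / h2 s) (Set.Ici 0) t ≤ 0)
    (T : ℝ) (hT : 0 < T)
    (y1 y2 : ℝ → ℝ)
    (hy1pos : ∀ t ∈ Set.Ico (0:ℝ) T, 0 < y1 t)
    (hy2pos : ∀ t ∈ Set.Ico (0:ℝ) T, 0 < y2 t)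
    (hy1d : ∀ t ∈ Set.Ico (0:ℝ) T,
      HasDerivWithinAt y1 (h1 t * y1 t ^ p11 * y2 t ^ p12) (Set.Ico 0 T) t)
    (hy2d : ∀ t ∈ Set.Ico (0:ℝ) T,
      HasDerivWithinAt y2 (h2 t * y2 t ^ p22 * y1 t ^ p21) (Set.Ico 0 T) t)
    (ha1 : 0 < p21 - p11 + 1) (ha2 : p12 - p22 + 1 ≠ 0) :
    ∃ c : ℝ, 0 < c ∧ ∀ t ∈ Set.Ico (0:ℝ) T,
      c * (h1 t / h2 t) ^ (1 / (p21 - p11 + 1)) *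
          y2 t ^ ((p12 - p22 + 1) / (p21 - p11 + 1)) ≤ y1 t :=
  statement8_general p11 p12 p21 p22 h1 h2 hh1c hh2c hh1p hh2p hdec T hT y1 y2 hy1pos hy2pos hy1d
    hy2d ha1
end

section
/- Let (y₁,y₂) : [0,T) → (0,∞)² be a differentiable solution of the ODE system with y₁(0), y₂(0) > 0. Assume a₁ > 0, a₂ = 0, and that h₁(t)/h₂(t) ≡ c̃ for a constant c̃ > 0, and suppose c > 0 is a constant such that y₁(t)^{a₁} ≥ c·c̃·log(y₂(t)) for all t ∈ [0,T). Then for every t ∈ [0,T): ∫_{y₁(0)}^{y₁(t)} s^{−p₁₁}·exp(−p₁₂·(c·c̃)^{−1}·s^{a₁}) ds ≤ ∫₀ᵗ h₁(s) ds. Consequently, if ∫₀ᵗ h₁(s) ds ≤ ∫_{y₁(0)}^{∞} s^{−p₁₁}·exp(−p₁₂·(c·c̃)^{−1}·s^{a₁}) ds for all t ≥ 0, then for every finite S > 0 one has sup{ y₁(t) : t ∈ [0,T), t ≤ S } < ∞ (the first component does not blow up in finite time). -/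
open MeasureTheory Set
open scoped Topology

/-!
With `w s = s ^ (-p₁₁) * exp (-(p₁₂ (c c̃)⁻¹ s ^ a₁))`, the bound `c c̃ log y₂ ≤ y₁ ^ a₁` gives
`y₂ ^ p₁₂ ≤ exp (p₁₂ (c c̃)⁻¹ y₁ ^ a₁)`, hence `w (y₁ t) * y₁' t ≤ h₁ t`; so
`t ↦ ∫₀ᵗ h₁ - ∫_{y₁ 0}^{y₁ t} w` is nondecreasing and vanishes at `0`.
If `y₁` were unbounded on `[0, T)`, the first part would bound the whole improper integral of `w`
by `∫₀ᵀ h₁ < ∫₀^{T+1} h₁`, contradicting the hypothesis at time `T + 1`.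
-/

theorem hasDerivAt_integral_right_of_continuousOn {g : ℝ → ℝ} {U : Set ℝ} {x₀ x : ℝ}
    (hg : ContinuousOn g U) (hUm : MeasurableSet U) (hU : U ∈ 𝓝 x) (hsub : uIcc x₀ x ⊆ U) :
    HasDerivAt (fun u => ∫ s in x₀..u, g s) (g x) x :=
  intervalIntegral.integral_hasDerivAt_right ((hg.mono hsub).intervalIntegrable)
    (AEStronglyMeasurable.stronglyMeasurableAtFilter_of_mem (μ := volume)
      (hg.aestronglyMeasurable hUm) hU) (hg.continuousAt hU)

theorem strictMonoOn_integral_of_pos {h : ℝ → ℝ} {a : ℝ} (hc : ContinuousOn h (Ici a))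
    (hpos : ∀ t ∈ Ici a, 0 < h t) : StrictMonoOn (fun t => ∫ s in a..t, h s) (Ici a) := by
  have hint : ∀ u ∈ Ici a, ∀ v ∈ Ici a, IntervalIntegrable h volume u v := fun u hu v hv =>
    (hc.mono fun _ hx => le_trans (le_min hu hv) hx.1).intervalIntegrable
  intro u hu v hv huv
  have hsplit :=
    intervalIntegral.integral_add_adjacent_intervals (hint a (le_refl a) u hu) (hint u hu v hv)
  have hpos' : 0 < ∫ s in u..v, h s :=
    intervalIntegral.intervalIntegral_pos_of_pos_on (hint u hu v hv)
      (fun x hx => hpos x (hu.trans hx.1.le)) huv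
  dsimp only
  linarith

theorem exp_neg_mul_mul_rpow_le_one {z q κ u : ℝ} (hz : 0 < z) (hq : 0 ≤ q) (hκ : 0 < κ)
    (hu : κ * Real.log z ≤ u) : Real.exp (-(q * κ⁻¹ * u)) * z ^ q ≤ 1 := by
  have hlog : q * Real.log z ≤ q * κ⁻¹ * u := by
    calc q * Real.log z = q * κ⁻¹ * (κ * Real.log z) := by field_simp
      _ ≤ q * κ⁻¹ * u := by gcongr
  rw [Real.rpow_def_of_pos hz, ← Real.exp_add, Real.exp_le_one_iff]
  linarith

theorem rpow_neg_mul_exp_mul_le_of_mul_log_le {x z h p q κ a : ℝ} (hx : 0 < x) (hz : 0 < z)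
    (hh : 0 ≤ h) (hq : 0 ≤ q) (hκ : 0 < κ) (hb : κ * Real.log z ≤ x ^ a) :
    x ^ (-p) * Real.exp (-(q * κ⁻¹ * x ^ a)) * (h * x ^ p * z ^ q) ≤ h := by
  have hcancel : x ^ (-p) * x ^ p = 1 := by
    rw [← Real.rpow_add hx, neg_add_cancel, Real.rpow_zero]
  calc x ^ (-p) * Real.exp (-(q * κ⁻¹ * x ^ a)) * (h * x ^ p * z ^ q)
      = (x ^ (-p) * x ^ p) * (Real.exp (-(q * κ⁻¹ * x ^ a)) * z ^ q) * h := by ring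
    _ ≤ 1 * 1 * h := by
      rw [hcancel]
      gcongr
      exact exp_neg_mul_mul_rpow_le_one hz hq hκ hb
    _ = h := by ring

theorem intervalIntegral_comp_le_intervalIntegral {g h y y' : ℝ → ℝ} {m a b : ℝ}
    (hg : ContinuousOn g (Ioi m)) (hh : ContinuousOn h (Ici a))
    (hy : ∀ t ∈ Ico a b, m < y t)
    (hy' : ∀ t ∈ Ico a b, HasDerivWithinAt y (y' t) (Ico a b) t)
    (hle : ∀ t ∈ Ioo a b, g (y t) * y' t ≤ h t) :
    ∀ t ∈ Ico a b, ∫ s in y a..y t, g s ≤ ∫ s in a..t, h s := by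
  intro t ht
  have ha : a ∈ Ico a b := ⟨le_rfl, ht.1.trans_lt ht.2⟩
  have hG : ∀ u ∈ Ico a b, HasDerivAt (fun x => ∫ s in y a..x, g s) (g (y u)) (y u) :=
    fun u hu => hasDerivAt_integral_right_of_continuousOn hg measurableSet_Ioi
      (Ioi_mem_nhds (hy u hu)) fun x hx => (lt_min (hy a ha) (hy u hu)).trans_le hx.1
  have hH : ∀ u ∈ Ioo a b, HasDerivAt (fun x => ∫ s in a..x, h s) (h u) u :=
    fun u hu => hasDerivAt_integral_right_of_continuousOn hh measurableSet_Ici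
      (Ici_mem_nhds hu.1) fun x hx => (le_min le_rfl hu.1.le).trans hx.1
  have hHcont : ContinuousOn (fun x => ∫ s in a..x, h s) (Ico a b) := by
    have hab : a ≤ b := ha.1.trans ha.2.le
    have hint : IntervalIntegrable h volume a b :=
      (hh.mono (uIcc_of_le hab ▸ Icc_subset_Ici_self)).intervalIntegrable
    exact (intervalIntegral.continuousOn_primitive_interval' hint left_mem_uIcc).mono
      (uIcc_of_le hab ▸ Ico_subset_Icc_self)
  have hmono : MonotoneOn (fun u => (∫ s in a..u, h s) - ∫ s in y a..y u, g s) (Ico a b) := by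
    refine monotoneOn_of_hasDerivWithinAt_nonneg (convex_Ico a b)
      (f' := fun u => h u - g (y u) * y' u) ?_ ?_ ?_
    · exact hHcont.sub fun u hu =>
        (hG u hu).continuousAt.comp_continuousWithinAt (hy' u hu).continuousWithinAt
    · intro u hu
      rw [interior_Ico] at hu ⊢
      exact (hH u hu).hasDerivWithinAt.sub ((hG u (Ioo_subset_Ico_self hu)).comp_hasDerivWithinAt u
        ((hy' u (Ioo_subset_Ico_self hu)).mono Ioo_subset_Ico_self))
    · intro u hu
      rw [interior_Ico] at hu
      exact sub_nonneg.2 (hle u hu)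
  simpa using hmono ha ht ht.1

theorem lintegral_Ioi_ofReal_le_of_intervalIntegral_le {g : ℝ → ℝ} {a K : ℝ}
    (hg : ContinuousOn g (Ici a)) (hg0 : ∀ x ∈ Ioi a, 0 ≤ g x)
    (hK : ∀ x ∈ Ici a, ∫ s in a..x, g s ≤ K) :
    ∫⁻ s in Ioi a, ENNReal.ofReal (g s) ≤ ENNReal.ofReal K := by
  have hcover : AECover (volume.restrict (Ioi a)) Filter.atTop (fun x : ℝ => Iic x) :=
    aecover_Iic Filter.tendsto_id
  have hmeas : AEMeasurable (fun s => ENNReal.ofReal (g s)) (volume.restrict (Ioi a)) :=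
    ((hg.mono Ioi_subset_Ici_self).aestronglyMeasurable
      measurableSet_Ioi).aemeasurable.ennreal_ofReal
  rw [← hcover.iSup_lintegral_eq_of_countably_generated hmeas]
  refine iSup_le fun x => ?_
  rw [Measure.restrict_restrict measurableSet_Iic, inter_comm, Ioi_inter_Iic]
  rcases le_or_gt a x with hx | hx
  · have hint : IntegrableOn g (Ioc a x) :=
      (hg.mono Icc_subset_Ici_self).integrableOn_Icc.mono_set Ioc_subset_Icc_self
    rw [← ofReal_integral_eq_lintegral_ofReal hint
      ((ae_restrict_iff' measurableSet_Ioc).2 (ae_of_all _ fun s hs => hg0 s hs.1)),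
      ← intervalIntegral.integral_of_le hx]
    exact ENNReal.ofReal_le_ofReal (hK x hx)
  · simp [Ioc_eq_empty_of_le hx.le]

theorem bddAbove_image_of_intervalIntegral_le {g y : ℝ → ℝ} {A : Set ℝ} {a K : ℝ}
    (hg : ContinuousOn g (Ici a)) (hg0 : ∀ x ∈ Ioi a, 0 ≤ g x)
    (hK : ∀ t ∈ A, ∫ s in a..y t, g s ≤ K)
    (hlt : ENNReal.ofReal K < ∫⁻ s in Ioi a, ENNReal.ofReal (g s)) : BddAbove (y '' A) := by
  by_contra hunb
  refine hlt.not_ge (lintegral_Ioi_ofReal_le_of_intervalIntegral_le hg hg0 fun x hx => ?_)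
  obtain ⟨_, ⟨t, ht, rfl⟩, hxt⟩ := not_bddAbove_iff.1 hunb x
  calc ∫ s in a..x, g s ≤ ∫ s in a..y t, g s :=
        intervalIntegral.integral_mono_interval le_rfl hx hxt.le
          ((ae_restrict_iff' measurableSet_Ioc).2 (ae_of_all _ fun s hs => hg0 s hs.1))
          (hg.mono fun s hs => (le_min le_rfl (hx.trans hxt.le)).trans hs.1).intervalIntegrable
    _ ≤ K := hK t ht

theorem statement16_general (p11 p12 p21 : ℝ)
    (hp12 : 0 ≤ p12)
    (h1 : ℝ → ℝ)
    (hh1c : ContinuousOn h1 (Set.Ici 0))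
    (hh1p : ∀ t : ℝ, 0 ≤ t → 0 < h1 t)
    (ct : ℝ) (hct : 0 < ct)
    (T : ℝ) (hT : 0 < T)
    (y1 y2 : ℝ → ℝ)
    (hy1pos : ∀ t ∈ Set.Ico (0:ℝ) T, 0 < y1 t)
    (hy2pos : ∀ t ∈ Set.Ico (0:ℝ) T, 0 < y2 t)
    (hy1d : ∀ t ∈ Set.Ico (0:ℝ) T,
      HasDerivWithinAt y1 (h1 t * y1 t ^ p11 * y2 t ^ p12) (Set.Ico 0 T) t)
    (c : ℝ) (hc : 0 < c)
    (hbound : ∀ t ∈ Set.Ico (0:ℝ) T,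
      c * ct * Real.log (y2 t) ≤ y1 t ^ (p21 - p11 + 1)) :
    (∀ t ∈ Set.Ico (0:ℝ) T,
      (∫ s in (y1 0)..(y1 t),
          s ^ (-p11) * Real.exp (-(p12 * (c * ct)⁻¹ * s ^ (p21 - p11 + 1)))) ≤
        ∫ s in (0:ℝ)..t, h1 s) ∧
    ((∀ t : ℝ, 0 ≤ t →
        ENNReal.ofReal (∫ s in (0:ℝ)..t, h1 s) ≤
          ∫⁻ s in Set.Ioi (y1 0),
            ENNReal.ofReal
              (s ^ (-p11) * Real.exp (-(p12 * (c * ct)⁻¹ * s ^ (p21 - p11 + 1))))) →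
      ∀ S : ℝ, 0 < S → ∃ C : ℝ, ∀ t ∈ Set.Ico (0:ℝ) T, t ≤ S → y1 t ≤ C) := by
  set w : ℝ → ℝ := fun s => s ^ (-p11) * Real.exp (-(p12 * (c * ct)⁻¹ * s ^ (p21 - p11 + 1)))
  have hw : ContinuousOn w (Ioi 0) := fun x hx =>
    have hx0 : x ≠ 0 := ne_of_gt hx
    ContinuousAt.continuousWithinAt (by fun_prop (disch := exact Or.inl hx0))
  have hw0 : ∀ x ∈ Ioi (0:ℝ), 0 ≤ w x := fun x hx =>
    mul_nonneg (Real.rpow_nonneg hx.le _) (Real.exp_nonneg _)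
  have part1 : ∀ t ∈ Ico 0 T, ∫ s in y1 0..y1 t, w s ≤ ∫ s in 0..t, h1 s :=
    intervalIntegral_comp_le_intervalIntegral hw hh1c hy1pos hy1d fun t ht =>
      have ht' : t ∈ Ico 0 T := Ioo_subset_Ico_self ht
      rpow_neg_mul_exp_mul_le_of_mul_log_le (hy1pos t ht') (hy2pos t ht') (hh1p t ht'.1).le hp12
        (mul_pos hc hct) (hbound t ht')
  refine ⟨part1, fun H _ _ => ?_⟩
  have hy10 : 0 < y1 0 := hy1pos 0 ⟨le_rfl, hT⟩
  have hprim := strictMonoOn_integral_of_pos hh1c hh1p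
  have hK0 : 0 ≤ ∫ s in (0:ℝ)..T, h1 s := by
    simpa using hprim.monotoneOn (le_refl (0:ℝ)) hT.le hT.le
  obtain ⟨C, hC⟩ : BddAbove (y1 '' Ico 0 T) := by
    refine bddAbove_image_of_intervalIntegral_le (hw.mono fun x hx => hy10.trans_le hx)
      (fun x hx => hw0 x (hy10.trans hx))
      (fun t ht => (part1 t ht).trans (hprim.monotoneOn ht.1 hT.le ht.2.le)) ?_
    calc ENNReal.ofReal (∫ s in (0:ℝ)..T, h1 s) < ENNReal.ofReal (∫ s in (0:ℝ)..T + 1, h1 s) :=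
          (ENNReal.ofReal_lt_ofReal_iff_of_nonneg hK0).2
            (hprim hT.le (by simp only [mem_Ici]; positivity) (lt_add_one T))
      _ ≤ _ := H (T + 1) (by positivity)
  exact ⟨C, fun t ht _ => hC (mem_image_of_mem y1 ht)⟩

/-- Theorem 1.3(b.2) of the paper. With `a₁ = p₂₁-p₁₁+1 > 0`,
`a₂ = p₁₂-p₂₂+1 = 0`, `h₁/h₂ ≡ c̃ > 0`, and a constant `c > 0` with
`y₁^{a₁} ≥ c c̃ log y₂` on `[0,T)`, one has
`∫_{y₁(0)}^{y₁(t)} s^{-p₁₁} exp(-p₁₂ (c c̃)⁻¹ s^{a₁}) ds ≤ ∫₀ᵗ h₁(s) ds` on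
`[0,T)`; consequently, if `∫₀ᵗ h₁ ≤ ∫_{y₁(0)}^{∞} s^{-p₁₁} exp(-p₁₂(c c̃)⁻¹s^{a₁}) ds`
for all `t ≥ 0` (the improper integral, taken as a Lebesgue integral with
values in `[0,∞]`, may be infinite), then `y₁` is bounded on `[0,T) ∩ [0,S]`
for every finite `S > 0`. -/
theorem statement16 (p11 p12 p21 p22 : ℝ)
    (hp11 : 0 ≤ p11) (hp12 : 0 ≤ p12) (hp21 : 0 ≤ p21) (hp22 : 0 ≤ p22)
    (h1 h2 : ℝ → ℝ)
    (hh1c : ContinuousOn h1 (Set.Ici 0)) (hh2c : ContinuousOn h2 (Set.Ici 0))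
    (hh1p : ∀ t : ℝ, 0 ≤ t → 0 < h1 t) (hh2p : ∀ t : ℝ, 0 ≤ t → 0 < h2 t)
    (ct : ℝ) (hct : 0 < ct) (hconst : ∀ t : ℝ, 0 ≤ t → h1 t / h2 t = ct)
    (T : ℝ) (hT : 0 < T)
    (y1 y2 : ℝ → ℝ)
    (hy1pos : ∀ t ∈ Set.Ico (0:ℝ) T, 0 < y1 t)
    (hy2pos : ∀ t ∈ Set.Ico (0:ℝ) T, 0 < y2 t)
    (hy1d : ∀ t ∈ Set.Ico (0:ℝ) T,
      HasDerivWithinAt y1 (h1 t * y1 t ^ p11 * y2 t ^ p12) (Set.Ico 0 T) t)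
    (hy2d : ∀ t ∈ Set.Ico (0:ℝ) T,
      HasDerivWithinAt y2 (h2 t * y2 t ^ p22 * y1 t ^ p21) (Set.Ico 0 T) t)
    (ha1 : 0 < p21 - p11 + 1) (ha2 : p12 - p22 + 1 = 0)
    (c : ℝ) (hc : 0 < c)
    (hbound : ∀ t ∈ Set.Ico (0:ℝ) T,
      c * ct * Real.log (y2 t) ≤ y1 t ^ (p21 - p11 + 1)) :
    (∀ t ∈ Set.Ico (0:ℝ) T,
      (∫ s in (y1 0)..(y1 t),
          s ^ (-p11) * Real.exp (-(p12 * (c * ct)⁻¹ * s ^ (p21 - p11 + 1)))) ≤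
        ∫ s in (0:ℝ)..t, h1 s) ∧
    ((∀ t : ℝ, 0 ≤ t →
        ENNReal.ofReal (∫ s in (0:ℝ)..t, h1 s) ≤
          ∫⁻ s in Set.Ioi (y1 0),
            ENNReal.ofReal
              (s ^ (-p11) * Real.exp (-(p12 * (c * ct)⁻¹ * s ^ (p21 - p11 + 1))))) →
      ∀ S : ℝ, 0 < S → ∃ C : ℝ, ∀ t ∈ Set.Ico (0:ℝ) T, t ≤ S → y1 t ≤ C) :=
  statement16_general p11 p12 p21 hp12 h1 hh1c hh1p ct hct T hT y1 y2 hy1pos hy2pos hy1d c hc hbound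
end
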